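/- With A, H, φ as in the Radon–Nikodym theorem and (π, H^φ, S) the minimal Stinespring dilation of φ, the map Δ ↦ φ_Δ, where φ_Δ(a) := S* Δ π(a) S, is an order-preserving bijection from { Δ ∈ π(A)' : 0 ≤ Δ ≤ I } onto { ψ : A → L(H) completely positive : ψ ≤ φ }; i.e., Δ₁ ≤ Δ₂ if and only if φ_{Δ₂} − φ_{Δ₁} is completely positive. -/

import Mathlib

open ContinuousLinearMap

noncomputable section

def IsPosMat {R : Type*} [NonUnitalSemiring R] [StarRing R] {n : ℕ}
    (M : Matrix (Fin n) (Fin n) R) : Prop :=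
  ∃ B : Matrix (Fin n) (Fin n) R, M = B.conjTranspose * B

def IsCPFun {A B : Type*} [NonUnitalSemiring A] [StarRing A]
    [NonUnitalSemiring B] [StarRing B] (f : A → B) : Prop :=
  ∀ (m : ℕ) (a : Matrix (Fin m) (Fin m) A), IsPosMat a → IsPosMat (a.map f)

/-!
For `Δ` in the commutant of `π(A)`, `∑ ⟪ξᵢ, φ_Δ(aᵢ⋆ aⱼ) ξⱼ⟫ = ⟪w, Δ w⟫` with `w = ∑ π(aⱼ) S ξⱼ`.
Such vectors `w` are dense by minimality, so `φ_Δ` is completely positive exactly when `Δ ≥ 0`;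
with `φ_{Δ₂} - φ_{Δ₁} = φ_{Δ₂ - Δ₁}` and `φ - φ_Δ = φ_{1 - Δ}` this gives the order statement and
shows that `Δ ↦ φ_Δ` maps into `{ψ ≤ φ}`, and density also gives injectivity.
Conversely, `0 ≤ ψ ≤ φ` makes `(∑ aᵢ ⊗ ξᵢ, ∑ bⱼ ⊗ ηⱼ) ↦ ∑ ⟪ξᵢ, ψ(aᵢ⋆ bⱼ) ηⱼ⟫` a nonnegative
form dominated by `‖∑ π(aᵢ) S ξᵢ‖²`. By Cauchy–Schwarz it descends to a bounded form on `H₁`,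
represented by an operator `0 ≤ Δ ≤ 1` commuting with `π(A)` and with `φ_Δ = ψ`.
-/

open scoped InnerProductSpace ComplexOrder

namespace ContinuousLinearMap

variable {E : Type*} [NormedAddCommGroup E] [InnerProductSpace ℂ E]

theorem isPositive_of_inner_nonneg {T : E →L[ℂ] E} (h : ∀ x, 0 ≤ ⟪x, T x⟫_ℂ) :
    T.IsPositive := by
  have hsymm (x : E) : ⟪T x, x⟫_ℂ = ⟪x, T x⟫_ℂ := by
    rw [← inner_conj_symm]
    exact (IsSelfAdjoint.of_nonneg (h x)).star_eq
  refine (isPositive_iff T).2 ⟨(LinearMap.isSymmetric_iff_inner_map_self_real _).2 fun x => ?_,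
    fun x => hsymm x ▸ h x⟩
  change starRingEnd ℂ ⟪T x, x⟫_ℂ = ⟪T x, x⟫_ℂ
  rw [hsymm]
  exact (IsSelfAdjoint.of_nonneg (h x)).star_eq

theorem isPositive_of_denseRange {X : Type*} {V : X → E} (hV : DenseRange V) {T : E →L[ℂ] E}
    (h : ∀ f, 0 ≤ ⟪V f, T (V f)⟫_ℂ) : T.IsPositive :=
  isPositive_of_inner_nonneg fun x =>
    hV.induction_on x (isClosed_le continuous_const (by fun_prop)) h

theorem ext_of_inner_dense_span [CompleteSpace E] {s : Set E}
    (hs : Dense (Submodule.span ℂ s : Set E)) {T U : E →L[ℂ] E}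
    (h : ∀ u ∈ s, ∀ v ∈ s, ⟪u, T v⟫_ℂ = ⟪u, U v⟫_ℂ) : T = U := by
  refine ext_on hs fun v hv => (InnerProductSpace.toDual ℂ E).injective (ext_on hs fun u hu => ?_)
  simp only [InnerProductSpace.toDual_apply_apply]
  rw [← inner_conj_symm, h u hu v hv, inner_conj_symm]

end ContinuousLinearMap

namespace LinearMap

variable {M : Type*} [AddCommGroup M] [Module ℂ M] {q : M →ₗ⋆[ℂ] M →ₗ[ℂ] ℂ}

theorem IsNonneg.isSymm (hq : q.IsNonneg) : q.IsSymm := by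
  refine isSymm_def.2 fun x y => ?_
  have him (z : M) : (q z z).im = 0 := (Complex.nonneg_iff.1 (hq.nonneg z)).2.symm
  -- polarization: `q (x + y) (x + y)` and `q (x + I • y) (x + I • y)` are real
  have h₁ := him (x + y)
  have h₂ := him (x + Complex.I • y)
  simp [him x, him y] at h₁ h₂
  apply Complex.ext <;> simp <;> linarith

theorem IsNonneg.norm_apply_sq_le (hq : q.IsNonneg) (x y : M) :
    ‖q x y‖ ^ 2 ≤ (q x x).re * (q y y).re := by
  let core : PreInnerProductSpace.Core ℂ M :=
    { inner x y := q x y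
      conj_inner_symm x y := hq.isSymm.eq y x
      re_inner_nonneg x := (Complex.nonneg_iff.1 (hq.nonneg x)).1
      add_left x y z := by simp
      smul_left x y r := by simp }
  have hcs := InnerProductSpace.Core.inner_mul_inner_self_le (c := core) x y
  change ‖q x y‖ * ‖q y x‖ ≤ (q x x).re * (q y y).re at hcs
  rwa [← hq.isSymm.eq x y, RCLike.norm_conj, ← sq] at hcs

end LinearMap

section DenseForm

variable {M E : Type*} [AddCommGroup M] [Module ℂ M]
  [NormedAddCommGroup E] [InnerProductSpace ℂ E] [CompleteSpace E]

theorem exists_clm_inner_eq_of_norm_le {V : M →ₗ[ℂ] E} (hV : DenseRange V)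
    (q : M →ₗ⋆[ℂ] M →ₗ[ℂ] ℂ) (hq : ∀ f g, ‖q f g‖ ≤ ‖V f‖ * ‖V g‖) :
    ∃ T : E →L[ℂ] E, ∀ f g, ⟪V f, T (V g)⟫_ℂ = q f g := by
  have hext {F G : E →L[ℂ] ℂ} (h : ∀ g, F (V g) = G (V g)) : F = G :=
    DFunLike.coe_injective (hV.equalizer F.continuous G.continuous (funext h))
  have hQ₀ (f g : M) : (q f).extendOfNorm V (V g) = q f g :=
    LinearMap.extendOfNorm_eq hV ⟨‖V f‖, hq f⟩ g
  let Q₀ : M →ₗ⋆[ℂ] E →L[ℂ] ℂ :=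
    { toFun f := (q f).extendOfNorm V
      map_add' f f' := hext fun g => by
        rw [add_apply, hQ₀, hQ₀, hQ₀, map_add, LinearMap.add_apply]
      map_smul' c f := hext fun g => by
        rw [smul_apply, hQ₀, hQ₀, map_smulₛₗ, LinearMap.smul_apply] }
  have hQ₀V : ∀ f, ‖Q₀ f‖ ≤ 1 * ‖V f‖ := fun f => by
    rw [one_mul]
    exact LinearMap.opNorm_extendOfNorm_le hV (norm_nonneg _) (hq f)
  let Q : E →L⋆[ℂ] E →L[ℂ] ℂ := Q₀.extendOfNorm V
  refine ⟨adjoint (InnerProductSpace.continuousLinearMapOfBilin Q), fun f g => ?_⟩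
  rw [adjoint_inner_right, InnerProductSpace.continuousLinearMapOfBilin_apply,
    LinearMap.extendOfNorm_eq hV ⟨1, hQ₀V⟩]
  exact hQ₀ f g

end DenseForm

namespace Matrix

variable {ι H : Type*} [Fintype ι] [NormedAddCommGroup H] [InnerProductSpace ℂ H]

def toBlockCLM (M : Matrix ι ι (H →L[ℂ] H)) :
    PiLp 2 (fun _ : ι => H) →L[ℂ] PiLp 2 (fun _ : ι => H) :=
  (PiLp.continuousLinearEquiv 2 ℂ (fun _ : ι => H)).symm.toContinuousLinearMap ∘L
    ContinuousLinearMap.pi fun i => ∑ j, M i j ∘L PiLp.proj 2 (fun _ : ι => H) j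

@[simp]
theorem toBlockCLM_apply (M : Matrix ι ι (H →L[ℂ] H)) (x : PiLp 2 (fun _ : ι => H)) (i : ι) :
    M.toBlockCLM x i = ∑ j, M i j (x j) := by
  simp [toBlockCLM]

theorem inner_toBlockCLM (M : Matrix ι ι (H →L[ℂ] H)) (x y : PiLp 2 (fun _ : ι => H)) :
    ⟪x, M.toBlockCLM y⟫_ℂ = ∑ i, ∑ j, ⟪x i, M i j (y j)⟫_ℂ := by
  simp [PiLp.inner_apply, inner_sum]

end Matrix

section PosMat

variable {H : Type*} [NormedAddCommGroup H] [InnerProductSpace ℂ H] [CompleteSpace H] {n : ℕ}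

theorem IsPosMat.sum_inner_nonneg {M : Matrix (Fin n) (Fin n) (H →L[ℂ] H)} (hM : IsPosMat M)
    (x : Fin n → H) : 0 ≤ ∑ i, ∑ j, ⟪x i, M i j (x j)⟫_ℂ := by
  obtain ⟨B, rfl⟩ := hM
  have : ∑ i, ∑ j, ⟪x i, (B.conjTranspose * B) i j (x j)⟫_ℂ
      = ∑ k, ⟪∑ i, B k i (x i), ∑ j, B k j (x j)⟫_ℂ := by
    simp only [Matrix.mul_apply, Matrix.conjTranspose_apply, star_eq_adjoint, sum_apply,
      mul_def, comp_apply, inner_sum, sum_inner, adjoint_inner_right]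
    exact (Finset.sum_congr rfl fun _ _ => Finset.sum_comm).trans
      (Finset.sum_comm.trans (Finset.sum_congr rfl fun _ _ => Finset.sum_comm))
  rw [this]
  refine Finset.sum_nonneg fun k _ => ?_
  rw [inner_self_eq_norm_sq_to_K]
  positivity

set_option synthInstance.maxHeartbeats 100000 in
theorem isPosMat_of_sum_inner_nonneg {M : Matrix (Fin n) (Fin n) (H →L[ℂ] H)}
    (hM : ∀ x : Fin n → H, 0 ≤ ∑ i, ∑ j, ⟪x i, M i j (x j)⟫_ℂ) : IsPosMat M := by
  have hT : 0 ≤ M.toBlockCLM := (nonneg_iff_isPositive _).2 <|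
    isPositive_of_inner_nonneg fun x => M.inner_toBlockCLM x x ▸ hM x
  obtain ⟨R, hR⟩ := CStarAlgebra.nonneg_iff_eq_star_mul_self.1 hT
  let J (j : Fin n) : H →L[ℂ] PiLp 2 (fun _ : Fin n => H) :=
    (PiLp.continuousLinearEquiv 2 ℂ (fun _ : Fin n => H)).symm.toContinuousLinearMap ∘L
      ContinuousLinearMap.single ℂ (fun _ : Fin n => H) j
  -- `M i j = Jᵢ† (R† R) Jⱼ` and `∑ₖ Pₖ† Pₖ = 1`, so `N k j = Pₖ R Jⱼ` satisfies `N† N = M`.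
  refine ⟨Matrix.of fun k j => PiLp.proj 2 (fun _ : Fin n => H) k ∘L R ∘L J j, ?_⟩
  ext i j ξ : 3
  refine ext_inner_left ℂ fun η => ?_
  simp only [Matrix.mul_apply, Matrix.conjTranspose_apply, Matrix.of_apply, star_eq_adjoint,
    sum_apply, mul_def, comp_apply, inner_sum, adjoint_inner_right]
  have hRR : ⟪R (J i η), R (J j ξ)⟫_ℂ = ⟪J i η, M.toBlockCLM (J j ξ)⟫_ℂ := by
    rw [hR, mul_apply_eq_comp, star_eq_adjoint, adjoint_inner_right]
  simp only [PiLp.proj_apply]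
  rw [← PiLp.inner_apply, hRR, Matrix.inner_toBlockCLM]
  simp [J, apply_ite]
  rw [Fintype.sum_eq_single i fun k hk => by simp [hk]]
  simp

end PosMat

section CompletelyPositive

variable {A H : Type*} [NonUnitalSemiring A] [StarRing A]
  [NormedAddCommGroup H] [InnerProductSpace ℂ H] [CompleteSpace H] {ψ : A → (H →L[ℂ] H)}

theorem IsCPFun.sum_inner_nonneg (hψ : IsCPFun ψ) {ι : Type*} (s : Finset ι) (a : ι → A)
    (ξ : ι → H) : 0 ≤ ∑ i ∈ s, ∑ j ∈ s, ⟪ξ i, ψ (star (a i) * a j) (ξ j)⟫_ℂ := by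
  have hfin (n : ℕ) (b : Fin n → A) (x : Fin n → H) :
      0 ≤ ∑ i, ∑ j, ⟪x i, ψ (star (b i) * b j) (x j)⟫_ℂ := by
    rcases n with _ | n
    · simp
    -- `[bᵢ⋆ bⱼ] = B⋆ B`, where `B` has first row `b` and zeros elsewhere
    · refine (hψ _ _ ⟨Matrix.of fun k j => if k = 0 then b j else 0, ?_⟩).sum_inner_nonneg x
      ext i j
      simp [Matrix.mul_apply]
  convert hfin _ (fun k => a (s.equivFin.symm k)) (fun k => ξ (s.equivFin.symm k)) using 1
  rw [← Finset.sum_coe_sort s, ← s.equivFin.symm.sum_comp]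
  refine Finset.sum_congr rfl fun k _ => ?_
  rw [← Finset.sum_coe_sort s, ← s.equivFin.symm.sum_comp]

theorem isCPFun_of_sum_inner_nonneg (hadd : ∀ a b, ψ (a + b) = ψ a + ψ b)
    (h : ∀ (n : ℕ) (a : Fin n → A) (ξ : Fin n → H),
      0 ≤ ∑ i, ∑ j, ⟪ξ i, ψ (star (a i) * a j) (ξ j)⟫_ℂ) : IsCPFun ψ := by
  rintro m _ ⟨B, rfl⟩
  refine isPosMat_of_sum_inner_nonneg fun x => ?_
  have hsum : ∀ s : Finset (Fin m), ∀ c : Fin m → A, ψ (∑ k ∈ s, c k) = ∑ k ∈ s, ψ (c k) :=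
    fun s c => map_sum (AddMonoidHom.mk' ψ hadd) c s
  have : ∑ i, ∑ j, ⟪x i, (B.conjTranspose * B).map ψ i j (x j)⟫_ℂ
      = ∑ k, ∑ i, ∑ j, ⟪x i, ψ (star (B k i) * B k j) (x j)⟫_ℂ := by
    simp only [Matrix.map_apply, Matrix.mul_apply, Matrix.conjTranspose_apply, hsum, sum_apply,
      inner_sum]
    exact (Finset.sum_congr rfl fun _ _ => Finset.sum_comm).trans Finset.sum_comm
  rw [this]
  exact Finset.sum_nonneg fun k _ => h m (B k) x

end CompletelyPositive

section KernelForm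

variable {A H : Type*} [Semiring A] [StarRing A]
  [NormedAddCommGroup H] [InnerProductSpace ℂ H]

/-- `A →₀ H` stands for the algebraic tensor product `A ⊗ H`, and `kernelForm ψ` is the form
`⟪∑ aᵢ ⊗ ξᵢ, ∑ bⱼ ⊗ ηⱼ⟫ = ∑ ⟪ξᵢ, ψ (aᵢ⋆ bⱼ) ηⱼ⟫` of the Stinespring construction. -/
def kernelForm (ψ : A → (H →L[ℂ] H)) : (A →₀ H) →ₗ⋆[ℂ] (A →₀ H) →ₗ[ℂ] ℂ :=
  Finsupp.lsum ℂ fun a =>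
    (innerₛₗ ℂ).compl₂ (Finsupp.lsum ℂ fun b => (ψ (star a * b)).toLinearMap)

theorem kernelForm_apply (ψ : A → (H →L[ℂ] H)) (f g : A →₀ H) :
    kernelForm ψ f g = ∑ a ∈ f.support, ∑ b ∈ g.support, ⟪f a, ψ (star a * b) (g b)⟫_ℂ := by
  simp [kernelForm, Finsupp.sum]

theorem kernelForm_single (ψ : A → (H →L[ℂ] H)) (a b : A) (ξ η : H) :
    kernelForm ψ (Finsupp.single a ξ) (Finsupp.single b η) = ⟪ξ, ψ (star a * b) η⟫_ℂ := by
  simp [kernelForm]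

theorem kernelForm_sub (ψ₁ ψ₂ : A → (H →L[ℂ] H)) :
    kernelForm (fun a => ψ₁ a - ψ₂ a) = kernelForm ψ₁ - kernelForm ψ₂ := by
  ext f g
  simp [kernelForm_apply]

theorem IsCPFun.kernelForm_nonneg [CompleteSpace H] {ψ : A → (H →L[ℂ] H)} (hψ : IsCPFun ψ) :
    (kernelForm ψ).IsNonneg :=
  ⟨fun f => kernelForm_apply ψ f f ▸ hψ.sum_inner_nonneg f.support id f⟩

end KernelForm

section Dilation

variable {A H H₁ : Type*} [Semiring A] [StarRing A] [Algebra ℂ A]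
  [NormedAddCommGroup H] [InnerProductSpace ℂ H]
  [NormedAddCommGroup H₁] [InnerProductSpace ℂ H₁] [CompleteSpace H₁]
  {π : A →⋆ₐ[ℂ] (H₁ →L[ℂ] H₁)} {S : H →L[ℂ] H₁}

variable (π S) in
def dilationSum : (A →₀ H) →ₗ[ℂ] H₁ := Finsupp.lsum ℂ fun a => (π a ∘L S).toLinearMap

theorem dilationSum_apply (f : A →₀ H) :
    dilationSum π S f = ∑ a ∈ f.support, π a (S (f a)) := by
  simp [dilationSum, Finsupp.sum]

theorem dilationSum_single (a : A) (ξ : H) :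
    dilationSum π S (Finsupp.single a ξ) = π a (S ξ) := by
  simp [dilationSum]

theorem denseRange_dilationSum
    (hmin : (Submodule.span ℂ
      {v : H₁ | ∃ (a : A) (ξ : H), v = π a (S ξ)}).topologicalClosure = ⊤) :
    DenseRange (dilationSum π S) := by
  have hs : Dense (Submodule.span ℂ {v : H₁ | ∃ (a : A) (ξ : H), v = π a (S ξ)} : Set H₁) :=
    Submodule.dense_iff_topologicalClosure_eq_top.2 hmin
  refine hs.mono ?_
  rw [← LinearMap.coe_range]
  refine Submodule.span_le.2 ?_
  rintro _ ⟨a, ξ, rfl⟩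
  exact ⟨_, dilationSum_single a ξ⟩

variable [CompleteSpace H]

variable (π S) in
/-- The map `φ_Δ`. -/
def compression (Δ : H₁ →L[ℂ] H₁) (a : A) : H →L[ℂ] H := adjoint S ∘L Δ ∘L π a ∘L S

theorem compression_one : compression π S 1 = fun a => adjoint S ∘L π a ∘L S := by
  funext a; simp [compression, one_def]

theorem compression_sub (Δ₁ Δ₂ : H₁ →L[ℂ] H₁) (a : A) :
    compression π S (Δ₁ - Δ₂) a = compression π S Δ₁ a - compression π S Δ₂ a := by
  simp [compression, sub_comp, comp_sub]

theorem inner_compression {Δ : H₁ →L[ℂ] H₁} (hΔ : ∀ a, Commute Δ (π a)) (a b : A) (ξ η : H) :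
    ⟪ξ, compression π S Δ (star a * b) η⟫_ℂ = ⟪π a (S ξ), Δ (π b (S η))⟫_ℂ := by
  rw [compression, comp_apply, adjoint_inner_right, comp_apply, comp_apply, map_mul,
    mul_apply_eq_comp, ← mul_apply_eq_comp Δ, (hΔ _).eq, mul_apply_eq_comp, map_star,
    star_eq_adjoint, adjoint_inner_right]

theorem sum_inner_compression {Δ : H₁ →L[ℂ] H₁} (hΔ : ∀ a, Commute Δ (π a)) {ι κ : Type*}
    (s : Finset ι) (t : Finset κ) (a : ι → A) (b : κ → A) (ξ : ι → H) (η : κ → H) :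
    ∑ i ∈ s, ∑ j ∈ t, ⟪ξ i, compression π S Δ (star (a i) * b j) (η j)⟫_ℂ =
      ⟪∑ i ∈ s, π (a i) (S (ξ i)), Δ (∑ j ∈ t, π (b j) (S (η j)))⟫_ℂ := by
  simp only [inner_compression hΔ, sum_inner, map_sum, inner_sum]
  exact Finset.sum_comm

theorem kernelForm_compression {Δ : H₁ →L[ℂ] H₁} (hΔ : ∀ a, Commute Δ (π a)) (f g : A →₀ H) :
    kernelForm (compression π S Δ) f g = ⟪dilationSum π S f, Δ (dilationSum π S g)⟫_ℂ := by
  rw [kernelForm_apply, dilationSum_apply, dilationSum_apply]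
  exact sum_inner_compression hΔ _ _ id id f g

theorem isCPFun_compression_iff
    (hmin : (Submodule.span ℂ
      {v : H₁ | ∃ (a : A) (ξ : H), v = π a (S ξ)}).topologicalClosure = ⊤)
    {Δ : H₁ →L[ℂ] H₁} (hΔ : ∀ a, Commute Δ (π a)) :
    IsCPFun (compression π S Δ) ↔ Δ.IsPositive := by
  refine ⟨fun hcp => isPositive_of_denseRange (denseRange_dilationSum hmin) fun f =>
      kernelForm_compression hΔ f f ▸ hcp.kernelForm_nonneg.nonneg f, fun hpos => ?_⟩
  refine isCPFun_of_sum_inner_nonneg (fun a b => by simp [compression, comp_add, add_comp])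
    fun n a ξ => ?_
  rw [sum_inner_compression hΔ]
  exact hpos.inner_nonneg_right _

theorem eq_of_compression_eq
    (hmin : (Submodule.span ℂ
      {v : H₁ | ∃ (a : A) (ξ : H), v = π a (S ξ)}).topologicalClosure = ⊤)
    {Δ₁ Δ₂ : H₁ →L[ℂ] H₁} (h₁ : ∀ a, Commute Δ₁ (π a)) (h₂ : ∀ a, Commute Δ₂ (π a))
    (h : compression π S Δ₁ = compression π S Δ₂) : Δ₁ = Δ₂ := by
  refine ext_of_inner_dense_span (Submodule.dense_iff_topologicalClosure_eq_top.2 hmin) ?_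
  rintro _ ⟨b, η, rfl⟩ _ ⟨a, ξ, rfl⟩
  rw [← inner_compression h₁, ← inner_compression h₂, h]

theorem norm_kernelForm_le {ψ : A → (H →L[ℂ] H)} (hψ : IsCPFun ψ)
    (hdom : IsCPFun fun a => compression π S 1 a - ψ a) (f g : A →₀ H) :
    ‖kernelForm ψ f g‖ ≤ ‖dilationSum π S f‖ * ‖dilationSum π S g‖ := by
  have hre (f : A →₀ H) : (kernelForm ψ f f).re ≤ ‖dilationSum π S f‖ ^ 2 := by
    have h := (Complex.nonneg_iff.1 (hdom.kernelForm_nonneg.nonneg f)).1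
    rw [kernelForm_sub, LinearMap.sub_apply, LinearMap.sub_apply,
      kernelForm_compression fun a => Commute.one_left _, one_apply_eq_self, Complex.sub_re] at h
    rw [← inner_self_eq_norm_sq (𝕜 := ℂ)]
    exact sub_nonneg.1 h
  have hnn (f : A →₀ H) := (Complex.nonneg_iff.1 (hψ.kernelForm_nonneg.nonneg f)).1
  refine (pow_le_pow_iff_left₀ (norm_nonneg _) (by positivity) two_ne_zero).1 ?_
  calc ‖kernelForm ψ f g‖ ^ 2 ≤ (kernelForm ψ f f).re * (kernelForm ψ g g).re :=
        hψ.kernelForm_nonneg.norm_apply_sq_le f g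
    _ ≤ ‖dilationSum π S f‖ ^ 2 * ‖dilationSum π S g‖ ^ 2 :=
        mul_le_mul (hre f) (hre g) (hnn g) (by positivity)
    _ = _ := (mul_pow _ _ _).symm

theorem exists_compression_eq
    (hmin : (Submodule.span ℂ
      {v : H₁ | ∃ (a : A) (ξ : H), v = π a (S ξ)}).topologicalClosure = ⊤)
    {ψ : A → (H →L[ℂ] H)} (hψ : IsCPFun ψ) (hdom : IsCPFun fun a => compression π S 1 a - ψ a) :
    ∃ Δ : H₁ →L[ℂ] H₁, Δ.IsPositive ∧ (1 - Δ).IsPositive ∧ (∀ a, Commute Δ (π a)) ∧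
      compression π S Δ = ψ := by
  have hV := denseRange_dilationSum hmin
  obtain ⟨Δ, hΔ⟩ := exists_clm_inner_eq_of_norm_le hV (kernelForm ψ) (norm_kernelForm_le hψ hdom)
  have hgen (a b : A) (ξ η : H) : ⟪π a (S ξ), Δ (π b (S η))⟫_ℂ = ⟪ξ, ψ (star a * b) η⟫_ℂ := by
    rw [← dilationSum_single, ← dilationSum_single, hΔ, kernelForm_single]
  have hπ (c : A) (x y : H₁) : ⟪x, π c y⟫_ℂ = ⟪π (star c) x, y⟫_ℂ := by
    rw [map_star, star_eq_adjoint, adjoint_inner_left]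
  have hπmul (c a : A) (x : H₁) : π c (π a x) = π (c * a) x := by
    rw [map_mul, mul_apply_eq_comp]
  refine ⟨Δ, isPositive_of_denseRange hV fun f => hΔ f f ▸ hψ.kernelForm_nonneg.nonneg f,
    isPositive_of_denseRange hV fun f => ?_, fun c => ?_, ?_⟩
  · have h := hdom.kernelForm_nonneg.nonneg f
    rwa [kernelForm_sub, LinearMap.sub_apply, LinearMap.sub_apply,
      kernelForm_compression fun a => Commute.one_left _, ← hΔ, ← inner_sub_right] at h
  · refine ext_of_inner_dense_span (Submodule.dense_iff_topologicalClosure_eq_top.2 hmin) ?_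
    rintro _ ⟨b, η, rfl⟩ _ ⟨a, ξ, rfl⟩
    -- both sides equal `⟪η, ψ (b⋆ * c * a) ξ⟫`
    rw [mul_apply_eq_comp, mul_apply_eq_comp, hπmul, hgen, hπ, hπmul, hgen, star_mul, star_star,
      mul_assoc]
  · funext a
    ext ξ
    refine ext_inner_left ℂ fun η => ?_
    have h := hgen 1 a η ξ
    rw [map_one, one_apply_eq_self, star_one, one_mul] at h
    simp only [compression, comp_apply]
    rw [adjoint_inner_right, h]

end Dilation

theorem stmt13_general {A H H₁ : Type*}
    [NormedRing A] [StarRing A] [NormedAlgebra ℂ A]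
    [NormedAddCommGroup H] [InnerProductSpace ℂ H] [CompleteSpace H]
    [NormedAddCommGroup H₁] [InnerProductSpace ℂ H₁] [CompleteSpace H₁]
    (φ : A →ₗ[ℂ] (H →L[ℂ] H))
    (π : A →⋆ₐ[ℂ] (H₁ →L[ℂ] H₁)) (S : H →L[ℂ] H₁)
    (hdil : ∀ a : A, φ a = (adjoint S).comp ((π a).comp S))
    (hmin : (Submodule.span ℂ
      {v : H₁ | ∃ (a : A) (ξ : H), v = π a (S ξ)}).topologicalClosure = ⊤) :
    Set.BijOn
      (fun Δ : H₁ →L[ℂ] H₁ => fun a : A => (adjoint S).comp (Δ.comp ((π a).comp S)))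
      {Δ : H₁ →L[ℂ] H₁ |
        Δ.IsPositive ∧ (1 - Δ).IsPositive ∧ ∀ a : A, Δ.comp (π a) = (π a).comp Δ}
      {ψ : A → (H →L[ℂ] H) |
        (∀ a b : A, ψ (a + b) = ψ a + ψ b) ∧ (∀ (c : ℂ) (a : A), ψ (c • a) = c • ψ a) ∧
        IsCPFun ψ ∧ IsCPFun fun a => φ a - ψ a} ∧
    ∀ Δ₁ ∈ {Δ : H₁ →L[ℂ] H₁ |
        Δ.IsPositive ∧ (1 - Δ).IsPositive ∧ ∀ a : A, Δ.comp (π a) = (π a).comp Δ},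
      ∀ Δ₂ ∈ {Δ : H₁ →L[ℂ] H₁ |
        Δ.IsPositive ∧ (1 - Δ).IsPositive ∧ ∀ a : A, Δ.comp (π a) = (π a).comp Δ},
      ((Δ₂ - Δ₁).IsPositive ↔
        IsCPFun fun a : A =>
          (adjoint S).comp (Δ₂.comp ((π a).comp S)) -
            (adjoint S).comp (Δ₁.comp ((π a).comp S))) := by
  have hφ₁ (a : A) : φ a = compression π S 1 a := by
    rw [compression_one]; exact hdil a
  refine ⟨⟨?_, ?_, ?_⟩, ?_⟩
  · rintro Δ ⟨hpos, hpos₁, hΔ⟩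
    refine ⟨fun a b => by simp [comp_add, add_comp], fun c a => by simp,
      (isCPFun_compression_iff hmin hΔ).2 hpos, ?_⟩
    convert (isCPFun_compression_iff hmin
      fun a => (Commute.one_left _).sub_left (hΔ a)).2 hpos₁ using 2 with a
    rw [compression_sub, hφ₁]
    rfl
  · rintro Δ₁ ⟨-, -, h₁⟩ Δ₂ ⟨-, -, h₂⟩ h
    exact eq_of_compression_eq hmin h₁ h₂ h
  · rintro ψ ⟨-, -, hψ, hdom⟩
    simp_rw [hφ₁] at hdom
    obtain ⟨Δ, hpos, hpos₁, hΔ, rfl⟩ := exists_compression_eq hmin hψ hdom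
    exact ⟨Δ, ⟨hpos, hpos₁, hΔ⟩, rfl⟩
  · rintro Δ₁ ⟨-, -, h₁⟩ Δ₂ ⟨-, -, h₂⟩
    convert (isCPFun_compression_iff hmin fun a => Commute.sub_left (h₂ a) (h₁ a)).symm
      using 3 with a
    rw [compression_sub]
    rfl

/-- The map `Δ ↦ φ_Δ` with `φ_Δ(a) = S* Δ π(a) S` is an order-preserving bijection from
`{Δ ∈ π(A)' : 0 ≤ Δ ≤ I}` onto the set of completely positive maps `ψ` with `ψ ≤ φ`. -/
theorem stmt13 {A H H₁ : Type*}
    [NormedRing A] [StarRing A] [CStarRing A] [NormedAlgebra ℂ A] [StarModule ℂ A]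
    [CompleteSpace A]
    [NormedAddCommGroup H] [InnerProductSpace ℂ H] [CompleteSpace H]
    [NormedAddCommGroup H₁] [InnerProductSpace ℂ H₁] [CompleteSpace H₁]
    (φ : A →ₗ[ℂ] (H →L[ℂ] H)) (hφ : IsCPFun fun a => φ a)
    (π : A →⋆ₐ[ℂ] (H₁ →L[ℂ] H₁)) (S : H →L[ℂ] H₁)
    (hdil : ∀ a : A, φ a = (adjoint S).comp ((π a).comp S))
    (hmin : (Submodule.span ℂ
      {v : H₁ | ∃ (a : A) (ξ : H), v = π a (S ξ)}).topologicalClosure = ⊤) :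
    Set.BijOn
      (fun Δ : H₁ →L[ℂ] H₁ => fun a : A => (adjoint S).comp (Δ.comp ((π a).comp S)))
      {Δ : H₁ →L[ℂ] H₁ |
        Δ.IsPositive ∧ (1 - Δ).IsPositive ∧ ∀ a : A, Δ.comp (π a) = (π a).comp Δ}
      {ψ : A → (H →L[ℂ] H) |
        (∀ a b : A, ψ (a + b) = ψ a + ψ b) ∧ (∀ (c : ℂ) (a : A), ψ (c • a) = c • ψ a) ∧
        IsCPFun ψ ∧ IsCPFun fun a => φ a - ψ a} ∧
    ∀ Δ₁ ∈ {Δ : H₁ →L[ℂ] H₁ |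
        Δ.IsPositive ∧ (1 - Δ).IsPositive ∧ ∀ a : A, Δ.comp (π a) = (π a).comp Δ},
      ∀ Δ₂ ∈ {Δ : H₁ →L[ℂ] H₁ |
        Δ.IsPositive ∧ (1 - Δ).IsPositive ∧ ∀ a : A, Δ.comp (π a) = (π a).comp Δ},
      ((Δ₂ - Δ₁).IsPositive ↔
        IsCPFun fun a : A =>
          (adjoint S).comp (Δ₂.comp ((π a).comp S)) -
            (adjoint S).comp (Δ₁.comp ((π a).comp S))) :=
  stmt13_general φ π S hdil hmin
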